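/- arXiv:2103.01253 — 4 statements merged into one kernel-verified Lean document; each statement's English description precedes it below -/
import Mathlib

section
/- Let A be a P-algebra over a field k. Then A contains no nonzero finite-dimensional A-submodule: every left A-submodule of A (under left multiplication) that is finite-dimensional as a k-vector space is zero. -/
/-- A connected ℕ-graded algebra `A` over a field `k` (with grading `𝒜`) is a P-algebra with
respect to an increasing chain of graded subalgebras `F n` exhausting `A` and a strictly
increasing dimension function `pd` if each `F n` is a finite-dimensional Poincaré duality
algebra of dimension `pd n` (its grading being induced from that of `A`). -/
structure IsPAlgebra (k : Type*) [Field k] {A : Type*} [Ring A] [Algebra k A]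
    (𝒜 : ℕ → Submodule k A) [GradedAlgebra 𝒜]
    (F : ℕ → Subalgebra k A) (pd : ℕ → ℕ) : Prop where
  connected : 𝒜 0 = (1 : Submodule k A)
  chain : ∀ n, F n ≤ F (n + 1)
  exhaustive : ∀ a : A, ∃ n, a ∈ F n
  graded_subalgebra : ∀ n, (F n).toSubmodule = ⨆ i, 𝒜 i ⊓ (F n).toSubmodule
  finiteDimensional : ∀ n, FiniteDimensional k (F n)
  pd_lt : ∀ n, pd n < pd (n + 1)
  eq_bot_of_gt : ∀ n, ∀ j, pd n < j → 𝒜 j ⊓ (F n).toSubmodule = ⊥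
  top_rank : ∀ n, Module.finrank k ↥(𝒜 (pd n) ⊓ (F n).toSubmodule) = 1
  duality : ∀ n, ∀ j, j ≤ pd n → ∀ x ∈ 𝒜 j ⊓ (F n).toSubmodule, x ≠ 0 →
    ∃ z ∈ 𝒜 (pd n - j) ⊓ (F n).toSubmodule, z * x ≠ 0
/-! A finite-dimensional subspace of a graded vector space has its homogeneous components in a
finite set of degrees. But a nonzero `x` lies in some `F n`, hence in every later `F m`, and
Poincaré duality in `F m` applied to a nonzero homogeneous component of `x` gives `z` such that
`z * x` has a nonzero component in degree `pd m`, which is unbounded in `m`. -/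

open DirectSum

section Decomposition

variable {ι R M : Type*} [DecidableEq ι] [Semiring R] [AddCommMonoid M] [Module R M]
  (ℳ : ι → Submodule R M) [Decomposition ℳ]

theorem Submodule.isHomogeneous_of_le_iSup_inf {p : Submodule R M}
    (hp : p ≤ ⨆ i, ℳ i ⊓ p) : SetLike.IsHomogeneous ℳ p := by
  intro d x hx
  replace hx := hp hx
  induction hx using Submodule.iSup_induction' with
  | mem i y hy =>
    rcases eq_or_ne i d with rfl | hid
    · rw [decompose_of_mem_same ℳ hy.1]
      exact hy.2
    · rw [decompose_of_mem_ne ℳ hy.1 hid]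
      exact p.zero_mem
  | zero => simp
  | add y z _ _ hy hz =>
    rw [decompose_add, DirectSum.add_apply, Submodule.coe_add]
    exact p.add_mem hy hz

theorem Submodule.FG.exists_finset_decompose_eq_zero {N : Submodule R M} (hN : N.FG) :
    ∃ T : Finset ι, ∀ x ∈ N, ∀ i ∉ T, decompose ℳ x i = 0 := by
  classical
  obtain ⟨s, rfl⟩ := hN
  refine ⟨s.biUnion fun a => (decompose ℳ a).support, fun x hx => ?_⟩
  induction hx using Submodule.span_induction with
  | mem a ha =>
    intro i hi
    exact DFinsupp.notMem_support_iff.mp fun h => hi (Finset.mem_biUnion.mpr ⟨a, ha, h⟩)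
  | zero => simp
  | add y z _ _ hy hz => intro i hi; simp [hy i hi, hz i hi]
  | smul r y _ hy => intro i hi; rw [decompose_smul, DirectSum.smul_apply, hy i hi, smul_zero]

end Decomposition

namespace IsPAlgebra

variable {k A : Type*} [Field k] [Ring A] [Algebra k A] {𝒜 : ℕ → Submodule k A}
  [GradedAlgebra 𝒜] {F : ℕ → Subalgebra k A} {pd : ℕ → ℕ}

theorem exists_decompose_mul_ne_zero (hPA : IsPAlgebra k 𝒜 F pd) {n : ℕ} {x : A}
    (hxF : x ∈ F n) (hx : x ≠ 0) : ∃ z : A, (decompose 𝒜 (z * x) (pd n) : A) ≠ 0 := by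
  obtain ⟨j, hj⟩ : ∃ j, decompose 𝒜 x j ≠ 0 :=
    DFunLike.ne_iff.mp ((decomposeAddEquiv 𝒜).map_ne_zero_iff.mpr hx)
  have hxj : (decompose 𝒜 x j : A) ∈ 𝒜 j ⊓ (F n).toSubmodule :=
    ⟨(decompose 𝒜 x j).2,
      Submodule.isHomogeneous_of_le_iSup_inf 𝒜 (hPA.graded_subalgebra n).le j hxF⟩
  have hxj0 : (decompose 𝒜 x j : A) ≠ 0 := fun h => hj (Subtype.ext h)
  have hjn : j ≤ pd n := by
    by_contra! h
    exact hxj0 (by simpa [hPA.eq_bot_of_gt n j h] using hxj)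
  obtain ⟨z, hz, hzx⟩ := hPA.duality n j hjn _ hxj hxj0
  refine ⟨z, ?_⟩
  rwa [← Nat.sub_add_cancel hjn, coe_decompose_mul_add_of_left_mem 𝒜 hz.1]

end IsPAlgebra

/-- A P-algebra `A` over a field `k` contains no nonzero finite-dimensional left
`A`-submodule: every left `A`-submodule of `A` (i.e. left ideal, `A` acting by left
multiplication) which is finite-dimensional as a `k`-vector space is zero. -/
theorem statement2 {k A : Type*} [Field k] [Ring A] [Algebra k A]
    (𝒜 : ℕ → Submodule k A) [GradedAlgebra 𝒜]
    (F : ℕ → Subalgebra k A) (pd : ℕ → ℕ)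
    (hPA : IsPAlgebra k 𝒜 F pd)
    (N : Submodule A A) (hfin : FiniteDimensional k (N.restrictScalars k)) :
    N = ⊥ := by
  by_contra hN
  obtain ⟨x, hxN, hx0⟩ := Submodule.exists_mem_ne_zero_of_ne_bot hN
  obtain ⟨T, hT⟩ := (Module.Finite.iff_fg.mp hfin).exists_finset_decompose_eq_zero 𝒜
  obtain ⟨n, hn⟩ := hPA.exhaustive x
  obtain ⟨m, hnm, hmT⟩ : ∃ m, n ≤ m ∧ pd m ∉ T :=
    ((Filter.eventually_ge_atTop n).and <|
      (strictMono_nat_of_lt_succ hPA.pd_lt).tendsto_atTop.eventually <|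
        Nat.cofinite_eq_atTop ▸ T.eventually_cofinite_notMem).exists
  obtain ⟨z, hz⟩ :=
    hPA.exists_decompose_mul_ne_zero (monotone_nat_of_le_succ hPA.chain hnm hn) hx0
  exact hz (by simpa using hT (z * x) (N.smul_mem z hxN) _ hmT)
end

section
/- Let k be a field, let B be a Poincaré duality algebra of dimension d over k, and let M be a finitely generated graded B-module. Then there exists an injective homomorphism of graded B-modules from M into a finitely generated free graded B-module. -/
/-- A finite-dimensional ℕ-graded algebra `B` over a field `k` with grading `ℬ` is a
Poincaré duality algebra of dimension `d` if it is connected (`B^0 = k`), vanishes above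
degree `d`, has one-dimensional top component `B^d`, and satisfies Poincaré duality. -/
structure IsPoincareDualityAlgebra (k : Type*) [Field k] {B : Type*} [Ring B] [Algebra k B]
    (ℬ : ℕ → Submodule k B) [GradedAlgebra ℬ] (d : ℕ) : Prop where
  finiteDimensional : FiniteDimensional k B
  connected : ℬ 0 = (1 : Submodule k B)
  eq_bot_of_gt : ∀ j, d < j → ℬ j = ⊥
  top_rank : Module.finrank k (ℬ d) = 1
  duality : ∀ j, j ≤ d → ∀ x ∈ ℬ j, x ≠ 0 → ∃ z ∈ ℬ (d - j), z * x ≠ 0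

/-!
A Poincaré duality algebra is Frobenius: if `τ : B → k` reads off the coefficient of the
top-degree component `B^d ≅ k`, the pairing `(a, c) ↦ τ (a * c)` is nondegenerate, so
`c ↦ τ (· * c)` identifies `B` with its `k`-dual. Hence a `k`-linear functional `f` on a
`B`-module `M` assigns to each `x ∈ M` the unique `c_f(x) ∈ B` with `τ (a * c_f(x)) = f (a • x)`
for all `a`, and `x ↦ c_f(x)` is `B`-linear. Letting `f` run through a basis of `M^*` made of
homogeneous functionals gives an injective `B`-linear map `M → Bᵐ`. If `f` has degree `e` and `x`
has degree `j`, a nonzero component of `c_f(x)` of degree `r` is detected by some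
`a ∈ B^(d-r)`, and then `f (a • x) ≠ 0` forces `d - r + j = e`; so the copy of `B` belonging to
`f` is shifted by `e - d`.
-/

open DirectSum

theorem DirectSum.mem_of_decompose_eq_zero_of_ne {ι M σ : Type*} [DecidableEq ι]
    [AddCommMonoid M] [SetLike σ M] [AddSubmonoidClass σ M] (ℳ : ι → σ) [Decomposition ℳ]
    {x : M} {i : ι} (h : ∀ j ≠ i, (decompose ℳ x j : M) = 0) : x ∈ ℳ i := by
  have hx : x = decompose ℳ x i := by
    apply (decompose ℳ).injective
    ext j
    by_cases hj : j = i
    · subst hj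
      rw [decompose_coe, of_eq_same]
    · rw [h j hj, decompose_coe, of_eq_of_ne _ _ _ hj, ZeroMemClass.coe_zero]
  rw [hx]
  exact SetLike.coe_mem _

theorem DirectSum.mem_ite_toNat_of_decompose_ne_zero {R M : Type*} [Semiring R]
    [AddCommMonoid M] [Module R M] (ℳ : ℕ → Submodule R M) [Decomposition ℳ] {x : M} {n : ℤ}
    (h : ∀ r : ℕ, (decompose ℳ x r : M) ≠ 0 → (r : ℤ) = n) :
    x ∈ if 0 ≤ n then ℳ n.toNat else ⊥ := by
  split_ifs with hn
  · refine mem_of_decompose_eq_zero_of_ne ℳ fun r hr => ?_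
    by_contra hx
    have := h r hx
    omega
  · rw [Submodule.mem_bot, ← (decompose ℳ).injective.eq_iff, decompose_zero]
    ext r
    by_contra hx
    have := h r hx
    omega

theorem exists_separating_homogeneous_functionals {k M ι : Type*} [Field k] [AddCommGroup M]
    [Module k M] [FiniteDimensional k M] [DecidableEq ι] (ℳ : ι → Submodule k M)
    [Decomposition ℳ] :
    ∃ (m : ℕ) (deg : Fin m → ι) (f : Fin m → Module.Dual k M),
      (∀ x, (∀ i, f i x = 0) → x = 0) ∧ ∀ i j, j ≠ deg i → ∀ x ∈ ℳ j, f i x = 0 := by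
  let b :=
    (Decomposition.isInternal ℳ).collectedBasis fun j => Module.Free.chooseBasis k (ℳ j)
  have := FiniteDimensional.fintypeBasisIndex b
  let e := Fintype.equivFin (Σ j, Module.Free.ChooseBasisIndex k (ℳ j))
  refine ⟨_, fun i => (e.symm i).1, fun i => b.coord (e.symm i), fun x hx => ?_,
    fun i j hj x hx => (Decomposition.isInternal ℳ).collectedBasis_repr_of_mem_ne _ hj hx⟩
  exact b.forall_coord_eq_zero_iff.mp fun s => by simpa using hx (e s)

section Frobenius

variable {k B : Type*} [Field k] [Ring B] [Algebra k B] [FiniteDimensional k B]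
  {τ : B →ₗ[k] k} (hτ : ∀ c : B, c ≠ 0 → ∃ a, τ (a * c) ≠ 0)

noncomputable def frobeniusDualEquiv : B ≃ₗ[k] Module.Dual k B :=
  LinearMap.linearEquivOfInjective ((LinearMap.mul k B).flip.compr₂ τ)
    (by
      rw [← LinearMap.ker_eq_bot, LinearMap.ker_eq_bot']
      intro c hc
      by_contra hc0
      obtain ⟨a, ha⟩ := hτ c hc0
      exact ha (LinearMap.congr_fun hc a))
    Subspace.dual_finrank_eq.symm

theorem frobeniusDualEquiv_apply (c a : B) :
    frobeniusDualEquiv hτ c a = τ (a * c) :=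
  rfl

theorem apply_mul_frobeniusDualEquiv_symm (g : Module.Dual k B) (a : B) :
    τ (a * (frobeniusDualEquiv hτ).symm g) = g a := by
  rw [← frobeniusDualEquiv_apply hτ, LinearEquiv.apply_symm_apply]

variable {M ι : Type*} [AddCommGroup M] [Module B M] [Module k M] [IsScalarTower k B M]

noncomputable def frobeniusEmbedding (f : ι → Module.Dual k M) : M →ₗ[B] (ι → B) where
  toFun x i := (frobeniusDualEquiv hτ).symm
    ((f i).comp ((LinearMap.toSpanSingleton B M x).restrictScalars k))
  map_add' x y := by
    funext i
    rw [Pi.add_apply, ← map_add]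
    congr 1
    ext a
    simp [smul_add]
  map_smul' b x := by
    funext i
    apply (frobeniusDualEquiv hτ).injective
    ext a
    simp [frobeniusDualEquiv_apply, ← mul_assoc, apply_mul_frobeniusDualEquiv_symm, mul_smul]

theorem apply_mul_frobeniusEmbedding (f : ι → Module.Dual k M) (x : M) (i : ι) (a : B) :
    τ (a * frobeniusEmbedding hτ f x i) = f i (a • x) :=
  apply_mul_frobeniusDualEquiv_symm hτ _ a

theorem frobeniusEmbedding_injective {f : ι → Module.Dual k M}
    (hf : ∀ x, (∀ i, f i x = 0) → x = 0) :
    Function.Injective (frobeniusEmbedding hτ f) := by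
  rw [← LinearMap.ker_eq_bot, LinearMap.ker_eq_bot']
  refine fun x hx => hf x fun i => ?_
  simpa [hx] using (apply_mul_frobeniusEmbedding hτ f x i 1).symm

end Frobenius

namespace IsPoincareDualityAlgebra

variable {k B : Type*} [Field k] [Ring B] [Algebra k B] {ℬ : ℕ → Submodule k B}
  [GradedAlgebra ℬ] {d : ℕ} (hB : IsPoincareDualityAlgebra k ℬ d)
include hB

noncomputable def topFunctional : B →ₗ[k] k :=
  (Module.basisUnique (Fin 1) hB.top_rank).coord 0 ∘ₗ component k ℕ (fun i => ℬ i) d ∘ₗ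
    (decomposeLinearEquiv ℬ).toLinearMap

theorem topFunctional_apply (c : B) :
    hB.topFunctional c = (Module.basisUnique (Fin 1) hB.top_rank).coord 0 (decompose ℬ c d) :=
  rfl

theorem topFunctional_ne_zero {w : B} (hw : w ∈ ℬ d) (hw0 : w ≠ 0) :
    hB.topFunctional w ≠ 0 := by
  rw [topFunctional_apply, decompose_of_mem ℬ hw, of_eq_same, Ne, Module.Basis.coord_apply,
    Module.basisUnique_repr_eq_zero_iff]
  exact fun h => hw0 (congrArg Subtype.val h)

theorem le_of_mem_of_ne_zero {r : ℕ} {c : B} (hc : c ∈ ℬ r) (hc0 : c ≠ 0) : r ≤ d := by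
  by_contra! hr
  rw [hB.eq_bot_of_gt r hr, Submodule.mem_bot] at hc
  exact hc0 hc

theorem exists_topFunctional_mul_ne_zero {c : B} {r : ℕ} (hc : (decompose ℬ c r : B) ≠ 0) :
    r ≤ d ∧ ∃ a ∈ ℬ (d - r), hB.topFunctional (a * c) ≠ 0 := by
  have hrd := hB.le_of_mem_of_ne_zero (SetLike.coe_mem _) hc
  obtain ⟨a, ha, hac⟩ := hB.duality r hrd _ (SetLike.coe_mem _) hc
  have hcomp : (decompose ℬ (a * c) d : B) = a * decompose ℬ c r := by
    rw [coe_decompose_mul_of_left_mem_of_le ℬ ha (Nat.sub_le d r), Nat.sub_sub_self hrd]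
  have hmem : a * decompose ℬ c r ∈ ℬ d := hcomp ▸ (decompose ℬ (a * c) d).2
  have hac_eq : hB.topFunctional (a * c) = hB.topFunctional (a * decompose ℬ c r) := by
    rw [topFunctional_apply, topFunctional_apply]
    exact congrArg _ (Subtype.ext (hcomp.trans (decompose_of_mem_same ℬ hmem).symm))
  exact ⟨hrd, a, ha, hac_eq ▸ hB.topFunctional_ne_zero hmem hac⟩

theorem exists_topFunctional_mul_ne_zero_of_ne_zero (c : B) (hc : c ≠ 0) :
    ∃ a, hB.topFunctional (a * c) ≠ 0 := by
  obtain ⟨r, hr⟩ : ∃ r, (decompose ℬ c r : B) ≠ 0 := by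
    by_contra! h
    exact hc ((decompose ℬ).injective (by ext r; simp [h r]))
  obtain ⟨-, a, -, ha⟩ := hB.exists_topFunctional_mul_ne_zero hr
  exact ⟨a, ha⟩

end IsPoincareDualityAlgebra

/-- Let `B` be a Poincaré duality algebra of dimension `d` over a field `k` and let `M` be a
finitely generated (ℤ-)graded `B`-module.  Then `M` embeds, by an injective homomorphism of
graded `B`-modules, into a finitely generated free graded `B`-module, i.e. a finite direct
sum `⊕ᵢ B⟨deg i⟩` of degree shifts of `B`; the map being graded means that a homogeneous
element of `M` of degree `j` is sent, in the `i`-th shifted copy of `B`, into the component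
of `B` of degree `j - deg i` (which is zero when `j - deg i < 0`). -/
theorem statement7 {k B : Type*} [Field k] [Ring B] [Algebra k B]
    (ℬ : ℕ → Submodule k B) [GradedAlgebra ℬ] (d : ℕ)
    (hPD : IsPoincareDualityAlgebra k ℬ d)
    {M : Type*} [AddCommGroup M] [Module B M] [Module k M] [IsScalarTower k B M]
    (ℳ : ℤ → Submodule k M) [DirectSum.Decomposition ℳ]
    (hMgr : ∀ (i : ℕ) (j : ℤ), ∀ a ∈ ℬ i, ∀ m ∈ ℳ j, a • m ∈ ℳ ((i : ℤ) + j))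
    [Module.Finite B M] :
    ∃ (m : ℕ) (deg : Fin m → ℤ) (φ : M →ₗ[B] (Fin m → B)),
      Function.Injective φ ∧
      ∀ (j : ℤ), ∀ x ∈ ℳ j, ∀ i : Fin m,
        φ x i ∈ (if 0 ≤ j - deg i then ℬ (j - deg i).toNat else (⊥ : Submodule k B)) := by
  have := hPD.finiteDimensional
  have : Module.Finite k M := Module.Finite.trans B M
  obtain ⟨m, deg, f, hsep, hhom⟩ := exists_separating_homogeneous_functionals ℳ
  have hτ := hPD.exists_topFunctional_mul_ne_zero_of_ne_zero
  refine ⟨m, fun i => deg i - d, frobeniusEmbedding hτ f, frobeniusEmbedding_injective hτ hsep,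
    fun j x hx i => mem_ite_toNat_of_decompose_ne_zero ℬ fun r hr => ?_⟩
  obtain ⟨hrd, a, ha, hax⟩ := hPD.exists_topFunctional_mul_ne_zero hr
  rw [apply_mul_frobeniusEmbedding] at hax
  have : ((d - r : ℕ) : ℤ) + j = deg i := by
    by_contra h
    exact hax (hhom i _ h _ (hMgr _ _ a ha x hx))
  show (r : ℤ) = j - (deg i - d)
  omega
end

section
/- Let A be a P-algebra over a field k, let n be such that A is flat as a right A(n)-module, let M' be a finitely generated graded A(n)-module, and set M = A ⊗_{A(n)} M'. Then there is an injective A-module homomorphism from M into a finitely generated free A-module F whose cokernel is isomorphic to A ⊗_{A(n)} Q' for some finitely generated graded A(n)-module Q'. -/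
/-- The `A`-linear map `A^p → A^q` of left `A`-modules given by right multiplication by the
matrix `T`, i.e. `v ↦ (∑ᵢ vᵢ * Tᵢⱼ)ⱼ`.  Every homomorphism of finitely generated free left
`A`-modules has this form. -/
def rightMulMatrix {A : Type*} [Ring A] {p q : ℕ} (T : Fin p → Fin q → A) :
    (Fin p → A) →ₗ[A] (Fin q → A) where
  toFun v := fun j => ∑ i, v i * T i j
  map_add' v w := by
    funext j
    simp [add_mul, Finset.sum_add_distrib]
  map_smul' a v := by
    funext j
    simp [Finset.mul_sum, mul_assoc]

/-- An `A`-module `M` is induced (extended) from a finitely generated graded module over a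
graded subalgebra `S ⊆ A`, i.e. `M ≅ A ⊗_S M'` for some finitely generated graded
`S`-module `M'`, exactly when `M` admits a finite presentation by a matrix `T` whose entries
lie in `S` and are homogeneous of the appropriate degrees: `M'` is then the `S`-module
presented by the same matrix. -/
def IsInducedFrom {k A : Type*} [Field k] [Ring A] [Algebra k A]
    (𝒜 : ℕ → Submodule k A) (S : Subalgebra k A)
    (M : Type*) [AddCommGroup M] [Module A M] : Prop :=
  ∃ (p q : ℕ) (T : Fin p → Fin q → A) (dp : Fin p → ℤ) (dq : Fin q → ℤ),
    (∀ i j, T i j ∈ S) ∧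
    (∀ i j, T i j ∈
      (if 0 ≤ dp i - dq j then 𝒜 (dp i - dq j).toNat else (⊥ : Submodule k A))) ∧
    Nonempty (M ≃ₗ[A] ((Fin q → A) ⧸ LinearMap.range (rightMulMatrix T)))

/-!
Present `M` as the cokernel of `v ↦ v T`, with `T` a homogeneous matrix over `B = A(n)`. The
solutions `u ∈ B^q` of `T u = 0` form a finite-dimensional graded space, spanned by the homogeneous
columns of a matrix `U` over `B`; then `v ↦ v U` embeds `M` into `A^m` with cokernel presented by
`U`. The point is exactness, `ker U = im T` over `A`: by flatness a vector `x` with `x U = 0` is an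
`A`-combination of vectors `r` over `B` with `r U = 0`; such an `r` annihilates every solution of
`T u = 0`, and since Poincaré duality makes `B` a Frobenius algebra (via a top-degree functional),
this double annihilator condition puts `r` in the row space of `T` over `B`.
-/

open Matrix DirectSum

section IntGrading

variable {k A : Type*} [Field k] [Ring A] [Algebra k A] (𝒜 : ℕ → Submodule k A) [GradedAlgebra 𝒜]

/-- `IsInducedFrom` is phrased in terms of this `ℤ`-indexed extension of the grading. -/
def intGrade (e : ℤ) : Submodule k A := if 0 ≤ e then 𝒜 e.toNat else ⊥

def intProj (e : ℤ) : A →ₗ[k] A := if 0 ≤ e then GradedAlgebra.proj 𝒜 e.toNat else 0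

lemma intProj_natCast (s : ℕ) (x : A) : intProj 𝒜 s x = GradedAlgebra.proj 𝒜 s x := by
  simp [intProj]

lemma intProj_of_neg {e : ℤ} (he : e < 0) (x : A) : intProj 𝒜 e x = 0 := by
  simp [intProj, not_le.2 he]

lemma intProj_mem (e : ℤ) (x : A) : intProj 𝒜 e x ∈ intGrade 𝒜 e := by
  unfold intProj intGrade
  split_ifs
  · exact (decompose 𝒜 x _).2
  · exact zero_mem _

lemma intProj_mul_of_mem {a : ℤ} {x : A} (hx : x ∈ intGrade 𝒜 a) (e : ℤ) (y : A) :
    intProj 𝒜 e (x * y) = x * intProj 𝒜 (e - a) y := by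
  unfold intGrade at hx
  split_ifs at hx with ha
  · lift a to ℕ using ha
    rw [Int.toNat_natCast] at hx
    rcases lt_or_ge e a with he | he
    · rw [intProj_of_neg 𝒜 (e := e - a) (by omega), mul_zero]
      rcases lt_or_ge e 0 with he' | he'
      · exact intProj_of_neg 𝒜 he' _
      · lift e to ℕ using he'
        rw [intProj_natCast, GradedAlgebra.proj_apply,
          coe_decompose_mul_of_left_mem_of_not_le 𝒜 hx (by omega)]
    · lift e to ℕ using le_trans (Int.natCast_nonneg a) he
      rw [show (e : ℤ) - a = ((e - a : ℕ) : ℤ) by omega, intProj_natCast, intProj_natCast,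
        GradedAlgebra.proj_apply, GradedAlgebra.proj_apply,
        coe_decompose_mul_of_left_mem_of_le 𝒜 hx (by omega)]
  · rw [(Submodule.mem_bot k).1 hx, zero_mul, zero_mul, map_zero]

lemma proj_mem_of_mem {S : Subalgebra k A}
    (hS : Subalgebra.toSubmodule S = ⨆ i, 𝒜 i ⊓ Subalgebra.toSubmodule S)
    {x : A} (hx : x ∈ S) (s : ℕ) : GradedAlgebra.proj 𝒜 s x ∈ S := by
  have hx' : x ∈ ⨆ i, 𝒜 i ⊓ Subalgebra.toSubmodule S := hS ▸ hx
  refine Submodule.iSup_induction _ (motive := fun y => GradedAlgebra.proj 𝒜 s y ∈ S) hx'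
    (fun i y hy => ?_) (by simp) (fun y z hy hz => by simpa using add_mem hy hz)
  by_cases h : i = s
  · subst h
    rw [GradedAlgebra.proj_apply, decompose_of_mem_same 𝒜 hy.1]
    exact hy.2
  · rw [GradedAlgebra.proj_apply, decompose_of_mem_ne 𝒜 hy.1 h]
    exact zero_mem S

lemma intProj_mem_of_mem {S : Subalgebra k A}
    (hS : Subalgebra.toSubmodule S = ⨆ i, 𝒜 i ⊓ Subalgebra.toSubmodule S)
    {x : A} (hx : x ∈ S) (e : ℤ) : intProj 𝒜 e x ∈ S := by
  rcases lt_or_ge e 0 with he | he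
  · rw [intProj_of_neg 𝒜 he]
    exact zero_mem S
  · obtain ⟨s, rfl⟩ := Int.eq_ofNat_of_zero_le he
    rw [intProj_natCast]
    exact proj_mem_of_mem 𝒜 hS hx s

lemma sum_intProj_sub (x : A) (c : ℤ) {Ts : Finset ℤ}
    (hTs : ∀ s : ℕ, GradedAlgebra.proj 𝒜 s x ≠ 0 → c - s ∈ Ts) :
    ∑ t ∈ Ts, intProj 𝒜 (c - t) x = x := by
  classical
  conv_rhs => rw [← sum_support_decompose 𝒜 x]
  have hnonneg : ∀ t, intProj 𝒜 (c - t) x ≠ 0 → 0 ≤ c - t := fun t h =>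
    not_lt.1 fun h' => h (intProj_of_neg 𝒜 h' x)
  refine Finset.sum_bij_ne_zero (fun t _ h => (c - t).toNat) (fun t _ h => ?_)
    (fun t₁ _ h₁ t₂ _ h₂ h => by have := hnonneg _ h₁; have := hnonneg _ h₂; omega)
    (fun s _ h => ⟨c - s, hTs s h, ?_, by simp⟩) (fun t _ h => ?_)
  · obtain ⟨s, hs⟩ := Int.eq_ofNat_of_zero_le (hnonneg t h)
    rw [hs, intProj_natCast, GradedAlgebra.proj_apply] at h
    rw [hs, Int.toNat_natCast, DFinsupp.mem_support_iff]
    exact fun h' => h (by rw [h', ZeroMemClass.coe_zero])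
  · rwa [sub_sub_cancel, intProj_natCast]
  · obtain ⟨s, hs⟩ := Int.eq_ofNat_of_zero_le (hnonneg t h)
    rw [hs, Int.toNat_natCast, intProj_natCast, GradedAlgebra.proj_apply]

end IntGrading

section HomogeneousMatrix

variable {k A : Type*} [Field k] [Ring A] [Algebra k A] (𝒜 : ℕ → Submodule k A) [GradedAlgebra 𝒜]
  {ι κ : Type*}

/-- Homogeneity making `v ↦ v T` a degree-preserving map between free modules with generators in
degrees `dr` and `dc`. -/
def IsHomogeneousMatrix (T : Matrix ι κ A) (dr : ι → ℤ) (dc : κ → ℤ) : Prop :=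
  ∀ i j, T i j ∈ intGrade 𝒜 (dr i - dc j)

/-- The part of `u` of degree `t`, where the `i`-th coordinate of a vector of degree `t` has
degree `d i - t`. -/
def vecProj (d : κ → ℤ) (t : ℤ) (u : κ → A) : κ → A := fun i => intProj 𝒜 (d i - t) (u i)

lemma mulVec_vecProj [Fintype κ] {T : Matrix ι κ A} {dr : ι → ℤ} {dc : κ → ℤ}
    (hT : IsHomogeneousMatrix 𝒜 T dr dc) (t : ℤ) (u : κ → A) :
    T *ᵥ vecProj 𝒜 dc t u = vecProj 𝒜 dr t (T *ᵥ u) := by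
  funext r
  simp only [mulVec, dotProduct, vecProj, map_sum, intProj_mul_of_mem 𝒜 (hT r _),
    sub_sub_sub_cancel_left]

lemma sum_vecProj (d : κ → ℤ) (u : κ → A) {Ts : Finset ℤ}
    (hTs : ∀ i (s : ℕ), GradedAlgebra.proj 𝒜 s (u i) ≠ 0 → d i - s ∈ Ts) :
    ∑ t ∈ Ts, vecProj 𝒜 d t u = u := by
  funext i
  rw [Finset.sum_apply]
  exact sum_intProj_sub 𝒜 (u i) (d i) (hTs i)

def solutionSpace [Fintype κ] (S : Subalgebra k A) (T : Matrix ι κ A) : Submodule k (κ → A) :=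
  Submodule.pi Set.univ (fun _ => Subalgebra.toSubmodule S) ⊓ LinearMap.ker (mulVecBilin k k T)

lemma mem_solutionSpace [Fintype κ] {S : Subalgebra k A} {T : Matrix ι κ A} {u : κ → A} :
    u ∈ solutionSpace S T ↔ (∀ i, u i ∈ S) ∧ T *ᵥ u = 0 := by
  simp [solutionSpace, Submodule.mem_pi]

instance [Fintype κ] (S : Subalgebra k A) [FiniteDimensional k S] (T : Matrix ι κ A) :
    FiniteDimensional k (solutionSpace S T) :=
  Submodule.finiteDimensional_of_le (S₂ := LinearMap.range
    (LinearMap.compLeft (Subalgebra.toSubmodule S).subtype κ)) fun u hu =>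
      ⟨fun i => ⟨u i, (mem_solutionSpace.1 hu).1 i⟩, rfl⟩

lemma vecProj_mem_solutionSpace [Fintype κ] {S : Subalgebra k A}
    (hS : Subalgebra.toSubmodule S = ⨆ i, 𝒜 i ⊓ Subalgebra.toSubmodule S)
    {T : Matrix ι κ A} {dr : ι → ℤ} {dc : κ → ℤ} (hT : IsHomogeneousMatrix 𝒜 T dr dc)
    {u : κ → A} (hu : u ∈ solutionSpace S T) (t : ℤ) : vecProj 𝒜 dc t u ∈ solutionSpace S T := by
  rw [mem_solutionSpace] at hu ⊢
  refine ⟨fun i => intProj_mem_of_mem 𝒜 hS (hu.1 i) _, ?_⟩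
  rw [mulVec_vecProj 𝒜 hT, hu.2]
  exact funext fun r => map_zero _

/-- Each generator of the solution space is the sum of its homogeneous components, which are
again solutions because `T` is homogeneous. -/
theorem exists_homogeneous_solutionSpace_generators [Fintype ι] {q : ℕ} {S : Subalgebra k A}
    [FiniteDimensional k S] (hS : Subalgebra.toSubmodule S = ⨆ i, 𝒜 i ⊓ Subalgebra.toSubmodule S)
    {T : Matrix ι (Fin q) A} {dr : ι → ℤ} {dc : Fin q → ℤ} (hT : IsHomogeneousMatrix 𝒜 T dr dc) :
    ∃ (m : ℕ) (U : Matrix (Fin q) (Fin m) A) (t : Fin m → ℤ),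
      (∀ i j, U i j ∈ S) ∧ IsHomogeneousMatrix 𝒜 U dc t ∧ T * U = 0 ∧
      solutionSpace S T ≤ Submodule.span k (Set.range Uᵀ) := by
  classical
  obtain ⟨N, v, hv⟩ := Submodule.fg_iff_exists_fin_generating_family.1
    (Module.Finite.iff_fg.1 (inferInstance : FiniteDimensional k (solutionSpace S T)))
  have hvproj : ∀ j t, vecProj 𝒜 dc t (v j) ∈ solutionSpace S T := fun j =>
    vecProj_mem_solutionSpace 𝒜 hS hT (hv ▸ Submodule.subset_span ⟨j, rfl⟩)
  set Ts : Finset ℤ := Finset.univ.biUnion fun j => Finset.univ.biUnion fun i =>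
    (decompose 𝒜 (v j i)).support.image fun s : ℕ => dc i - s
  let e := Fintype.equivFin (Fin N × Ts)
  refine ⟨Fintype.card (Fin N × Ts),
    Matrix.of fun i j => vecProj 𝒜 dc (e.symm j).2 (v (e.symm j).1) i, fun j => (e.symm j).2,
    fun i j => (mem_solutionSpace.1 (hvproj _ _)).1 i, fun i j => intProj_mem 𝒜 _ _,
    by ext r j; exact congrFun (mem_solutionSpace.1 (hvproj _ _)).2 r, ?_⟩
  rw [← hv, Submodule.span_le]
  rintro _ ⟨j, rfl⟩
  rw [← sum_vecProj 𝒜 dc (v j) (Ts := Ts) fun i s hs => ?_]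
  · refine Submodule.sum_mem _ fun t ht => Submodule.subset_span ⟨e (j, ⟨t, ht⟩), ?_⟩
    funext i
    simp
  · exact Finset.mem_biUnion.2 ⟨j, Finset.mem_univ _, Finset.mem_biUnion.2 ⟨i,
      Finset.mem_univ _, Finset.mem_image_of_mem _ ((GradedAlgebra.mem_support_iff 𝒜 _ _).2 hs)⟩⟩

end HomogeneousMatrix

section Frobenius

variable {k B : Type*} [Field k] [Ring B] [Algebra k B] {lam : B →ₗ[k] k}
  {m n : Type*} [Fintype m] [Fintype n]

def IsFrobeniusForm (lam : B →ₗ[k] k) : Prop :=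
  ∀ y : B, y ≠ 0 → ∃ b, lam (b * y) ≠ 0

lemma IsFrobeniusForm.eq_zero_of_forall_dotProduct (hlam : IsFrobeniusForm lam) {v : n → B}
    (hv : ∀ c, lam (c ⬝ᵥ v) = 0) : v = 0 := by
  classical
  funext i
  by_contra hi
  obtain ⟨b, hb⟩ := hlam _ hi
  exact hb (by simpa [single_dotProduct] using hv (Pi.single i b))

/-- Double annihilator property of a Frobenius algebra: in finite dimension the pairing
`(y, u) ↦ lam (y ⬝ᵥ u)` is perfect, so the row space of `T` is the annihilator of its kernel. -/
theorem IsFrobeniusForm.exists_vecMul_eq [FiniteDimensional k B] (hlam : IsFrobeniusForm lam)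
    (T : Matrix m n B) {y : n → B} (hy : ∀ u, T *ᵥ u = 0 → y ⬝ᵥ u = 0) : ∃ c, c ᵥ* T = y := by
  set P : (n → B) →ₗ[k] Module.Dual k (n → B) := ((dotProductBilin k k).flip).compr₂ lam
  have hP : Function.Surjective P := by
    refine (LinearMap.injective_iff_surjective_of_finrank_eq_finrank
      Subspace.dual_finrank_eq.symm).1 ?_
    rw [← LinearMap.ker_eq_bot, LinearMap.ker_eq_bot']
    exact fun u hu => hlam.eq_zero_of_forall_dotProduct fun c => LinearMap.congr_fun hu c
  by_contra! hrow
  obtain ⟨f, hfy, hf⟩ := Submodule.exists_dual_map_eq_bot_of_notMem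
    (p := LinearMap.range ((vecMulBilin k k).flip T)) (x := y)
    (by rintro ⟨c, rfl⟩; exact hrow c rfl) inferInstance
  obtain ⟨u, rfl⟩ := hP f
  have hTu : T *ᵥ u = 0 := hlam.eq_zero_of_forall_dotProduct fun c => by
    rw [dotProduct_mulVec]
    exact (Submodule.mem_bot k).1 (hf ▸ Submodule.mem_map_of_mem ⟨c, rfl⟩)
  exact hfy (by simp [P, hy u hTu])

end Frobenius

lemma exists_dual_ne_zero_of_finrank_eq_one {k V : Type*} [Field k] [AddCommGroup V]
    [Module k V] {W : Submodule k V} (hW : Module.finrank k W = 1) :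
    ∃ f : Module.Dual k V, ∀ w ∈ W, w ≠ 0 → f w ≠ 0 := by
  obtain ⟨v, hv0, hv⟩ := finrank_eq_one_iff'.1 hW
  obtain ⟨f, hf⟩ := Module.Projective.exists_dual_ne_zero k (x := (v : V)) (by simpa using hv0)
  refine ⟨f, fun w hw hw0 => ?_⟩
  obtain ⟨c, hc⟩ := hv ⟨w, hw⟩
  have hwv : w = c • (v : V) := (congrArg Subtype.val hc).symm
  subst hwv
  rw [map_smul, smul_eq_mul]
  exact mul_ne_zero (left_ne_zero_of_smul hw0) hf

theorem IsPAlgebra.exists_isFrobeniusForm {k A : Type*} [Field k] [Ring A] [Algebra k A]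
    {𝒜 : ℕ → Submodule k A} [GradedAlgebra 𝒜] {F : ℕ → Subalgebra k A} {pd : ℕ → ℕ}
    (hPA : IsPAlgebra k 𝒜 F pd) (n : ℕ) :
    ∃ lam : F n →ₗ[k] k, IsFrobeniusForm lam := by
  obtain ⟨f, hf⟩ := exists_dual_ne_zero_of_finrank_eq_one (hPA.top_rank n)
  refine ⟨f ∘ₗ GradedAlgebra.proj 𝒜 (pd n) ∘ₗ (F n).val.toLinearMap, fun y hy => ?_⟩
  obtain ⟨s, hs⟩ : ∃ s, GradedAlgebra.proj 𝒜 s y ≠ 0 := by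
    by_contra! h
    refine hy (Subtype.ext ((decompose 𝒜).injective ?_))
    ext s
    simpa using h s
  have hys : GradedAlgebra.proj 𝒜 s y ∈ 𝒜 s ⊓ Subalgebra.toSubmodule (F n) :=
    ⟨(decompose 𝒜 _ _).2, proj_mem_of_mem 𝒜 (hPA.graded_subalgebra n) y.2 s⟩
  have hsd : s ≤ pd n := by
    by_contra! h
    exact hs (by simpa [hPA.eq_bot_of_gt n s h] using hys)
  obtain ⟨z, hz, hzy⟩ := hPA.duality n s hsd _ hys hs
  refine ⟨⟨z, hz.2⟩, ?_⟩
  have hdeg : GradedAlgebra.proj 𝒜 (pd n) (z * y) = z * GradedAlgebra.proj 𝒜 s y := by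
    rw [GradedAlgebra.proj_apply, coe_decompose_mul_of_left_mem_of_le 𝒜 hz.1 (Nat.sub_le _ _),
      Nat.sub_sub_self hsd, GradedAlgebra.proj_apply]
  have hmem : z * GradedAlgebra.proj 𝒜 s y ∈ 𝒜 (pd n) ⊓ Subalgebra.toSubmodule (F n) :=
    ⟨Nat.sub_add_cancel hsd ▸ SetLike.mul_mem_graded hz.1 hys.1, (F n).mul_mem hz.2 hys.2⟩
  simpa [hdeg] using hf _ hmem hzy

section Subalgebra

variable {k A : Type*} [Field k] [Ring A] [Algebra k A] {S : Subalgebra k A}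
  {m n : Type*} [Fintype m] [Fintype n]

theorem IsFrobeniusForm.exists_vecMul_eq_of_mem [FiniteDimensional k S]
    {lam : S →ₗ[k] k} (hlam : IsFrobeniusForm lam)
    {T : Matrix m n A} (hT : ∀ i j, T i j ∈ S) {y : n → A} (hyS : ∀ i, y i ∈ S)
    (hy : ∀ u : n → A, (∀ i, u i ∈ S) → T *ᵥ u = 0 → y ⬝ᵥ u = 0) :
    ∃ c : m → A, c ᵥ* T = y := by
  let T' : Matrix m n S := Matrix.of fun i j => ⟨T i j, hT i j⟩
  have hy' : ∀ u, T' *ᵥ u = 0 → (fun i => ⟨y i, hyS i⟩ : n → S) ⬝ᵥ u = 0 := by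
    refine fun u hu => Subtype.ext ?_
    have := hy (fun i => u i) (fun i => (u i).2) (funext fun r => ?_)
    · simpa [dotProduct] using this
    · simpa [T', mulVec, dotProduct] using congrArg Subtype.val (congrFun hu r)
  obtain ⟨c, hc⟩ := hlam.exists_vecMul_eq T' hy'
  refine ⟨fun i => c i, funext fun j => ?_⟩
  simpa [T', vecMul, dotProduct] using congrArg Subtype.val (congrFun hc j)

end Subalgebra

section Flat

variable {k A : Type*} [Field k] [Ring A] [Algebra k A] {S : Subalgebra k A}

/-- The equational criterion for flatness of `A` as a right `S`-module. -/
def IsRightFlat (S : Subalgebra k A) : Prop :=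
  ∀ (q : ℕ) (x : Fin q → A), (∀ i, x i ∈ S) → ∀ a : Fin q → A, a ⬝ᵥ x = 0 →
    ∃ (p : ℕ) (c : Fin p → A) (r : Matrix (Fin p) (Fin q) A),
      (∀ j i, r j i ∈ S) ∧ c ᵥ* r = a ∧ r *ᵥ x = 0

lemma mul_apply_mem {l m n : Type*} [Fintype m] {M : Matrix l m A} {N : Matrix m n A}
    (hM : ∀ i j, M i j ∈ S) (hN : ∀ i j, N i j ∈ S) (i : l) (j : n) : (M * N) i j ∈ S :=
  Subalgebra.sum_mem _ fun r _ => S.mul_mem (hM i r) (hN r j)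

/-- Solve the relations one column at a time. -/
theorem IsRightFlat.exists_factorization (hflat : IsRightFlat S) {q N : ℕ}
    (X : Matrix (Fin q) (Fin N) A) (hX : ∀ i j, X i j ∈ S) {a : Fin q → A} (ha : a ᵥ* X = 0) :
    ∃ (p : ℕ) (c : Fin p → A) (R : Matrix (Fin p) (Fin q) A),
      (∀ s i, R s i ∈ S) ∧ c ᵥ* R = a ∧ R * X = 0 := by
  induction N generalizing q a with
  | zero =>
    refine ⟨q, a, 1, fun s i => ?_, vecMul_one a, by ext _ j; exact j.elim0⟩
    by_cases h : s = i <;> simp [one_apply, h, S.one_mem, S.zero_mem]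
  | succ N ih =>
    let Xs : Matrix (Fin q) (Fin N) A := fun i j => X i j.succ
    obtain ⟨p₁, c₁, r₁, hr₁S, rfl, hr₁X⟩ :=
      hflat q (fun i => X i 0) (fun i => hX i 0) a (congrFun ha 0)
    have hc₁ : c₁ ᵥ* (r₁ * Xs) = 0 := by
      rw [← vecMul_vecMul]
      exact funext fun j => congrFun ha j.succ
    obtain ⟨p, c, R, hRS, rfl, hRX⟩ :=
      ih (r₁ * Xs) (mul_apply_mem hr₁S fun i j => hX i j.succ) hc₁
    refine ⟨p, c, R * r₁, mul_apply_mem hRS hr₁S, (vecMul_vecMul _ _ _).symm, ?_⟩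
    ext s j
    refine Fin.cases ?_ (fun j => ?_) j
    · have hcol : R *ᵥ (r₁ *ᵥ fun i => X i 0) = 0 := by rw [hr₁X, mulVec_zero]
      rw [Matrix.mul_assoc]
      exact congrFun hcol s
    · have hrest : R * r₁ * Xs = 0 := by rw [Matrix.mul_assoc, hRX]
      exact congrFun (congrFun hrest s) j

theorem ker_rightMulMatrix_eq_range (hflat : IsRightFlat S) {p q m : ℕ}
    {T : Matrix (Fin p) (Fin q) A} {U : Matrix (Fin q) (Fin m) A} (hUS : ∀ i j, U i j ∈ S)
    (hTU : T * U = 0) (hrow : ∀ y : Fin q → A, (∀ i, y i ∈ S) → y ᵥ* U = 0 → ∃ b, b ᵥ* T = y) :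
    LinearMap.ker (rightMulMatrix U) = LinearMap.range (rightMulMatrix T) := by
  refine le_antisymm (fun x hx => ?_) ?_
  · obtain ⟨P, c, R, hRS, rfl, hRU⟩ := hflat.exists_factorization U hUS hx
    choose b hb using fun s => hrow (R s) (hRS s) (congrFun hRU s)
    refine ⟨c ᵥ* Matrix.of b, ?_⟩
    change c ᵥ* Matrix.of b ᵥ* T = c ᵥ* R
    rw [vecMul_vecMul]
    congr 1
    exact funext hb
  · rintro _ ⟨c, rfl⟩
    change c ᵥ* T ᵥ* U = 0
    rw [vecMul_vecMul, hTU, vecMul_zero]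

end Flat

/-- Let `A` be a P-algebra over a field `k` which is flat as a right module over `A(n)`
(expressed by the equational criterion for flatness), let `M'` be a finitely generated
graded `A(n)`-module and let `M = A ⊗_{A(n)} M'`.  Then there is an injective `A`-module
homomorphism from `M` into a finitely generated free `A`-module whose cokernel is again of
the form `A ⊗_{A(n)} Q'` for a finitely generated graded `A(n)`-module `Q'`. -/
theorem statement8 {k A : Type*} [Field k] [Ring A] [Algebra k A]
    (𝒜 : ℕ → Submodule k A) [GradedAlgebra 𝒜]
    (Fam : ℕ → Subalgebra k A) (pd : ℕ → ℕ)
    (hPA : IsPAlgebra k 𝒜 Fam pd) (n : ℕ)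
    -- `A` is flat as a right `A(n)`-module: the equational criterion for flatness
    (hflat : ∀ (m : ℕ) (x : Fin m → A), (∀ i, x i ∈ Fam n) → ∀ a : Fin m → A,
      ∑ i, a i * x i = 0 →
      ∃ (p : ℕ) (c : Fin p → A) (r : Fin p → Fin m → A),
        (∀ j i, r j i ∈ Fam n) ∧ (∀ i, a i = ∑ j, c j * r j i) ∧
        (∀ j, ∑ i, r j i * x i = 0))
    -- `M = A ⊗_{A(n)} M'` for a finitely generated graded `A(n)`-module `M'`
    {M : Type*} [AddCommGroup M] [Module A M]
    (hM : IsInducedFrom 𝒜 (Fam n) M) :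
    ∃ (m : ℕ) (φ : M →ₗ[A] (Fin m → A)),
      Function.Injective φ ∧
      IsInducedFrom 𝒜 (Fam n) ((Fin m → A) ⧸ LinearMap.range φ) := by
  obtain ⟨p, q, T, dp, dq, hTS, hT, ⟨e⟩⟩ := hM
  have hAflat : IsRightFlat (Fam n) := fun q x hx a ha => by
    obtain ⟨p, c, r, hrS, hc, hrx⟩ := hflat q x hx a ha
    exact ⟨p, c, r, hrS, funext fun i => (hc i).symm, funext hrx⟩
  have := hPA.finiteDimensional n
  obtain ⟨lam, hlam⟩ := hPA.exists_isFrobeniusForm n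
  obtain ⟨m, U, t, hUS, hU, hTU, hspan⟩ :=
    exists_homogeneous_solutionSpace_generators 𝒜 (hPA.graded_subalgebra n)
      (hT : IsHomogeneousMatrix 𝒜 T dp dq)
  have hker : LinearMap.ker (rightMulMatrix U) = LinearMap.range (rightMulMatrix T) := by
    refine ker_rightMulMatrix_eq_range hAflat hUS hTU fun y hyS hyU =>
      hlam.exists_vecMul_eq_of_mem hTS hyS fun u huS hTu => ?_
    have hle : Submodule.span k (Set.range Uᵀ) ≤ LinearMap.ker (dotProductBilin k k y) :=
      Submodule.span_le.2 (by rintro _ ⟨j, rfl⟩; exact congrFun hyU j)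
    exact hle (hspan (mem_solutionSpace.2 ⟨huS, hTu⟩))
  refine ⟨m, (LinearMap.range (rightMulMatrix T)).liftQ _ hker.ge ∘ₗ e.toLinearMap, ?_,
    q, m, U, dq, t, hUS, hU, ⟨Submodule.quotEquivOfEq _ _ ?_⟩⟩
  · rw [LinearMap.coe_comp]
    exact (LinearMap.ker_eq_bot.1 (Submodule.ker_liftQ_eq_bot' _ _ hker.symm)).comp e.injective
  · rw [LinearMap.range_comp, LinearEquiv.range, Submodule.map_top, Submodule.range_liftQ]
end

section
/- Let A be a P-algebra over a field k that is flat as a right A(n)-module for every n, and assume that every finitely generated free A-module is injective as an A-module (which holds for P-algebras by Margolis, Theorem 13.12). Then every coherent A-module M admits an injective resolution 0 → M → J^0 → J^1 → ⋯ in which each J^s is a finitely generated free A-module. -/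
/-!
Poincaré duality makes each `A(n)` a Frobenius algebra: if `ℓ` reads off the coefficient of the
top-degree class, then `(x, z) ↦ ℓ (x * z)` is nondegenerate. Over a Frobenius algebra every
finite-dimensional module embeds into a free one, so every submodule of `A(n)^b` is the kernel of
a matrix; iterating this from the relations of `M'` gives an exact sequence of matrices over
`A(n)`. Flatness of `A` over `A(n)`, in its equational form, keeps every relation
`ker = image` exact after extending scalars to `A`, and this is the required resolution.
-/

open Matrix LinearMap

section RightMulMatrix

variable {R : Type*} [Ring R] {a b c : ℕ}

@[simp]
theorem rightMulMatrix_apply (T : Matrix (Fin a) (Fin b) R) (v : Fin a → R) :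
    rightMulMatrix T v = v ᵥ* T := rfl

theorem mul_eq_zero_of_range_le_ker {V : Matrix (Fin a) (Fin b) R} {U : Matrix (Fin b) (Fin c) R}
    (h : range (rightMulMatrix V) ≤ ker (rightMulMatrix U)) : V * U = 0 := by
  ext i j
  have := congrFun (mem_ker.mp (h ⟨Pi.single i 1, rfl⟩)) j
  simp only [rightMulMatrix_apply, single_one_vecMul] at this
  exact this

theorem exists_rightMulMatrix_eq (f : (Fin a → R) →ₗ[R] (Fin b → R)) :
    ∃ T : Matrix (Fin a) (Fin b) R, rightMulMatrix T = f :=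
  ⟨.of fun i => f (Pi.single i 1), by ext i j; simp⟩

end RightMulMatrix

section Frobenius

variable {k S : Type*} [Field k] [Ring S] [Algebra k S]

def frobeniusDual (ℓ : S →ₗ[k] k) : S →ₗ[k] Module.Dual k S :=
  (LinearMap.mul k S).flip.compr₂ ℓ

@[simp]
theorem frobeniusDual_apply (ℓ : S →ₗ[k] k) (z x : S) : frobeniusDual ℓ z x = ℓ (x * z) := rfl

variable [FiniteDimensional k S] {ℓ : S →ₗ[k] k} (hℓ : ∀ z : S, z ≠ 0 → ∃ x, ℓ (x * z) ≠ 0)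
include hℓ

theorem frobeniusDual_bijective : Function.Bijective (frobeniusDual ℓ) := by
  have hinj : Function.Injective (frobeniusDual ℓ) := by
    rw [← ker_eq_bot, eq_bot_iff]
    intro z hz
    by_contra hz0
    obtain ⟨x, hx⟩ := hℓ z hz0
    exact hx (LinearMap.congr_fun (mem_ker.mp hz) x)
  exact ⟨hinj, (injective_iff_surjective_of_finrank_eq_finrank
    Subspace.dual_finrank_eq.symm).mp hinj⟩

variable {N : Type*} [AddCommGroup N] [Module S N] [Module k N] [IsScalarTower k S N]

theorem exists_linearMap_frobenius_lift (φ : Module.Dual k N) :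
    ∃ g : N →ₗ[S] S, ∀ n x, ℓ (x * g n) = φ (x • n) := by
  -- `g ↦ ℓ ∘ g` identifies `Hom_S(N, S)` with `Hom_k(N, k)`
  let e := LinearEquiv.ofBijective _ (frobeniusDual_bijective hℓ)
  have he : ∀ n x, ℓ (x * e.symm (φ ∘ₗ (toSpanSingleton S N n).restrictScalars k)) = φ (x • n) :=
    fun n x => LinearMap.congr_fun (e.apply_symm_apply _) x
  refine ⟨{ toFun := fun n => e.symm (φ ∘ₗ (toSpanSingleton S N n).restrictScalars k),
            map_add' := ?_, map_smul' := ?_ }, he⟩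
  · intro n n'
    apply e.injective
    ext x
    simp
  · intro s n
    apply e.injective
    ext x
    change ℓ (x * e.symm _) = ℓ (x * (s * e.symm _))
    rw [he, ← mul_assoc, he, mul_smul]

theorem exists_injective_linearMap_pi [FiniteDimensional k N] :
    ∃ (m : ℕ) (g : N →ₗ[S] (Fin m → S)), Function.Injective g := by
  let β := Module.finBasis k N
  choose g hg using fun j => exists_linearMap_frobenius_lift hℓ (β.coord j)
  refine ⟨_, LinearMap.pi g, ?_⟩
  rw [← ker_eq_bot, eq_bot_iff]
  intro n hn
  rw [Submodule.mem_bot, ← β.forall_coord_eq_zero_iff]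
  intro j
  have : g j n = 0 := congrFun (mem_ker.mp hn) j
  simpa [this] using (hg j n 1).symm

theorem exists_ker_rightMulMatrix_eq {b : ℕ} (K : Submodule S (Fin b → S)) :
    ∃ (r : ℕ) (V : Matrix (Fin b) (Fin r) S), ker (rightMulMatrix V) = K := by
  have : FiniteDimensional k ((Fin b → S) ⧸ K) :=
    Module.Finite.of_surjective (K.mkQ.restrictScalars k) K.mkQ_surjective
  obtain ⟨m, g, hg⟩ := exists_injective_linearMap_pi hℓ (N := (Fin b → S) ⧸ K)
  obtain ⟨V, hV⟩ := exists_rightMulMatrix_eq (g ∘ₗ K.mkQ)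
  exact ⟨m, V, by rw [hV, ker_comp, ker_eq_bot.mpr hg, Submodule.comap_bot, Submodule.ker_mkQ]⟩

end Frobenius

section PoincareDuality

open DirectSum

variable {k A : Type*} [Field k] [Ring A] [Algebra k A] (𝒜 : ℕ → Submodule k A)
  [GradedAlgebra 𝒜] {S : Subalgebra k A}

theorem isHomogeneous_of_eq_iSup (hgr : S.toSubmodule = ⨆ i, 𝒜 i ⊓ S.toSubmodule) :
    SetLike.IsHomogeneous 𝒜 S := by
  intro i z hz
  replace hz : z ∈ ⨆ i, 𝒜 i ⊓ S.toSubmodule := hgr ▸ hz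
  refine Submodule.iSup_induction _ (motive := fun z => (decompose 𝒜 z i : A) ∈ S) hz ?_ ?_ ?_
  · intro j x hx
    by_cases h : j = i
    · subst h
      rw [decompose_of_mem_same 𝒜 hx.1]
      exact hx.2
    · rw [decompose_of_mem_ne 𝒜 hx.1 h]
      exact S.zero_mem
  · simp
  · intro x y hx hy
    rw [decompose_add, DirectSum.add_apply, Submodule.coe_add]
    exact S.add_mem hx hy

theorem exists_nondegenerate_functional_of_poincareDuality {d : ℕ}
    (hgr : S.toSubmodule = ⨆ i, 𝒜 i ⊓ S.toSubmodule)
    (hbot : ∀ j, d < j → 𝒜 j ⊓ S.toSubmodule = ⊥)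
    (htop : Module.finrank k ↥(𝒜 d ⊓ S.toSubmodule) = 1)
    (hdual : ∀ j, j ≤ d → ∀ x ∈ 𝒜 j ⊓ S.toSubmodule, x ≠ 0 →
      ∃ z ∈ 𝒜 (d - j) ⊓ S.toSubmodule, z * x ≠ 0) :
    ∃ ℓ : S →ₗ[k] k, ∀ z : S, z ≠ 0 → ∃ x, ℓ (x * z) ≠ 0 := by
  have hS := isHomogeneous_of_eq_iSup 𝒜 hgr
  have : Module.Finite k ↥(𝒜 d ⊓ S.toSubmodule) := Module.finite_of_finrank_eq_succ htop
  let e : ↥(𝒜 d ⊓ S.toSubmodule) ≃ₗ[k] k := LinearEquiv.ofFinrankEq _ _ (by simpa using htop)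
  let top : S →ₗ[k] ↥(𝒜 d ⊓ S.toSubmodule) :=
    (GradedAlgebra.proj 𝒜 d ∘ₗ S.val.toLinearMap).codRestrict _
      fun s => ⟨SetLike.coe_mem _, hS d s.2⟩
  refine ⟨e ∘ₗ top, fun z hz => ?_⟩
  obtain ⟨j, hj⟩ : ∃ j, (decompose 𝒜 (z : A) j : A) ≠ 0 := by
    have : decompose 𝒜 (z : A) ≠ 0 := fun h =>
      hz (Subtype.ext ((decompose 𝒜).injective (h.trans (decompose_zero 𝒜).symm)))
    obtain ⟨j, hj⟩ := DFunLike.ne_iff.mp this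
    exact ⟨j, fun h => hj (Subtype.ext h)⟩
  have hzj : (decompose 𝒜 (z : A) j : A) ∈ 𝒜 j ⊓ S.toSubmodule :=
    ⟨SetLike.coe_mem _, hS j z.2⟩
  have hjd : j ≤ d := by
    by_contra! h
    exact hj (by simpa [hbot j h] using hzj)
  obtain ⟨x, ⟨hxd, hxS⟩, hx⟩ := hdual j hjd _ hzj hj
  refine ⟨⟨x, hxS⟩, ?_⟩
  have htop_eq : ((top (⟨x, hxS⟩ * z) : A)) = x * decompose 𝒜 (z : A) j := by
    have h := coe_decompose_mul_add_of_left_mem 𝒜 (b := (z : A)) (j := j) hxd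
    rwa [Nat.sub_add_cancel hjd] at h
  simpa [e.map_eq_zero_iff, ← Subtype.coe_inj, htop_eq] using hx

end PoincareDuality

theorem exists_exact_matrix_sequence {R : Type*} [Ring R]
    (hker : ∀ (b : ℕ) (K : Submodule R (Fin b → R)),
      ∃ (r : ℕ) (V : Matrix (Fin b) (Fin r) R), ker (rightMulMatrix V) = K)
    {q : ℕ} (K : Submodule R (Fin q → R)) :
    ∃ (r : ℕ → ℕ) (V₀ : Matrix (Fin q) (Fin (r 0)) R)
      (V : (s : ℕ) → Matrix (Fin (r s)) (Fin (r (s + 1))) R),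
      ker (rightMulMatrix V₀) = K ∧ ker (rightMulMatrix (V 0)) = range (rightMulMatrix V₀) ∧
      ∀ s, ker (rightMulMatrix (V (s + 1))) = range (rightMulMatrix (V s)) := by
  choose r V hV using hker
  let stage : ℕ → Σ b, Submodule R (Fin b → R) := fun s =>
    Nat.rec ⟨q, K⟩ (fun _ x => ⟨r x.1 x.2, range (rightMulMatrix (V x.1 x.2))⟩) s
  exact ⟨fun s => (stage (s + 1)).1, V q K, fun s => V (stage (s + 1)).1 (stage (s + 1)).2,
    hV q K, hV _ _, fun _ => hV _ _⟩

section Flatness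

variable {k A : Type*} [Field k] [Ring A] [Algebra k A] {S : Subalgebra k A}
  (hflat : ∀ (m : ℕ) (x : Fin m → A), (∀ i, x i ∈ S) → ∀ a : Fin m → A,
    ∑ i, a i * x i = 0 →
    ∃ (p : ℕ) (c : Fin p → A) (r : Fin p → Fin m → A),
      (∀ j i, r j i ∈ S) ∧ (∀ i, a i = ∑ j, c j * r j i) ∧
      (∀ j, ∑ i, r j i * x i = 0))
include hflat

theorem exists_factorization_of_vecMul_eq_zero {a b : ℕ} (U : Matrix (Fin a) (Fin b) S)
    (w : Fin a → A) (hw : w ᵥ* U.map S.val = 0) :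
    ∃ (p : ℕ) (c : Fin p → A) (R : Matrix (Fin p) (Fin a) S),
      w = c ᵥ* R.map S.val ∧ R * U = 0 := by
  induction b generalizing a with
  | zero => exact ⟨a, w, 1, by simp, by ext _ j; exact j.elim0⟩
  | succ b ih =>
    -- factor `w` through the relations of the first column, then recurse on the other columns
    obtain ⟨p, c, r, hrS, hwc, hr0⟩ :=
      hflat a (fun i => U i 0) (fun i => (U i 0).2) w (congrFun hw 0)
    let r₀ : Matrix (Fin p) (Fin a) S := .of fun j i => ⟨r j i, hrS j i⟩
    have hw' : w = c ᵥ* r₀.map S.val := funext hwc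
    let Y : Matrix (Fin p) (Fin b) S := .of fun l j => (r₀ * U) l j.succ
    have hcY : c ᵥ* Y.map S.val = 0 := by
      have h : c ᵥ* (r₀ * U).map S.val = 0 := by rw [Matrix.map_mul, ← vecMul_vecMul, ← hw', hw]
      ext j
      exact congrFun h j.succ
    obtain ⟨p', c', R', hc', hR'⟩ := ih Y c hcY
    refine ⟨p', c', R' * r₀, by rw [hw', hc', vecMul_vecMul, Matrix.map_mul], ?_⟩
    rw [Matrix.mul_assoc]
    refine Matrix.ext fun l j => ?_
    cases j using Fin.cases with
    | zero =>
      have hr₀ : ∀ l, (r₀ * U) l 0 = 0 := fun l =>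
        Subtype.ext <| by simp only [mul_apply]; push_cast; exact hr0 l
      rw [mul_apply]
      simp [hr₀]
    | succ j => exact congrFun (congrFun hR' l) j

theorem ker_map_eq_range_map {a b c : ℕ} {V : Matrix (Fin a) (Fin b) S}
    {U : Matrix (Fin b) (Fin c) S} (h : ker (rightMulMatrix U) = range (rightMulMatrix V)) :
    ker (rightMulMatrix (U.map S.val)) = range (rightMulMatrix (V.map S.val)) := by
  apply le_antisymm
  · intro w hw
    obtain ⟨p, c, R, rfl, hRU⟩ :=
      exists_factorization_of_vecMul_eq_zero hflat U w (mem_ker.mp hw)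
    have hrows : ∀ l, R l ∈ range (rightMulMatrix V) := fun l =>
      h ▸ mem_ker.mpr (by rw [rightMulMatrix_apply, ← mul_apply_eq_vecMul, hRU]; rfl)
    choose σ hσ using hrows
    have hR : R = Matrix.of σ * V := by
      ext l : 1
      rw [mul_apply_eq_vecMul, ← hσ l, rightMulMatrix_apply]
      rfl
    exact ⟨c ᵥ* (Matrix.of σ).map S.val,
      by rw [rightMulMatrix_apply, vecMul_vecMul, hR, Matrix.map_mul]⟩
  · rintro _ ⟨u, rfl⟩
    have hVU : V * U = 0 := mul_eq_zero_of_range_le_ker h.ge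
    rw [mem_ker, rightMulMatrix_apply, rightMulMatrix_apply, vecMul_vecMul, ← Matrix.map_mul, hVU]
    simp

end Flatness

theorem exists_injective_range_eq {R M N P : Type*} [Ring R] [AddCommGroup M] [AddCommGroup N]
    [AddCommGroup P] [Module R M] [Module R N] [Module R P] {p : Submodule R N}
    (e : M ≃ₗ[R] N ⧸ p) (f : N →ₗ[R] P) (hf : ker f = p) :
    ∃ ε : M →ₗ[R] P, Function.Injective ε ∧ range ε = range f := by
  refine ⟨p.liftQ f hf.ge ∘ₗ e.toLinearMap, ?_, ?_⟩
  · exact (ker_eq_bot.mp (p.ker_liftQ_eq_bot f hf.ge hf.le)).comp e.injective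
  · rw [range_comp, LinearEquiv.range, Submodule.map_top, Submodule.range_liftQ]

theorem statement9_general {k A : Type*} [Field k] [Ring A] [Algebra k A]
    (𝒜 : ℕ → Submodule k A) [GradedAlgebra 𝒜]
    (Fam : ℕ → Subalgebra k A) (pd : ℕ → ℕ)
    (hPA : IsPAlgebra k 𝒜 Fam pd)
    -- `A` is flat as a right `A(n)`-module for every `n`
    (hflat : ∀ (n m : ℕ) (x : Fin m → A), (∀ i, x i ∈ Fam n) → ∀ a : Fin m → A,
      ∑ i, a i * x i = 0 →
      ∃ (p : ℕ) (c : Fin p → A) (r : Fin p → Fin m → A),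
        (∀ j i, r j i ∈ Fam n) ∧ (∀ i, a i = ∑ j, c j * r j i) ∧
        (∀ j, ∑ i, r j i * x i = 0))
    -- `M` is a coherent `A`-module
    {M : Type*} [AddCommGroup M] [Module A M]
    (hM : ∃ n, IsInducedFrom 𝒜 (Fam n) M) :
    ∃ (r : ℕ → ℕ) (ε : M →ₗ[A] (Fin (r 0) → A))
      (δ : (s : ℕ) → ((Fin (r s) → A) →ₗ[A] (Fin (r (s + 1)) → A))),
      Function.Injective ε ∧
      LinearMap.range ε = LinearMap.ker (δ 0) ∧
      ∀ s, LinearMap.range (δ s) = LinearMap.ker (δ (s + 1)) := by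
  obtain ⟨n, p, q, T, -, -, hTS, -, ⟨e⟩⟩ := hM
  have := hPA.finiteDimensional n
  obtain ⟨ℓ, hℓ⟩ := exists_nondegenerate_functional_of_poincareDuality 𝒜
    (hPA.graded_subalgebra n) (hPA.eq_bot_of_gt n) (hPA.top_rank n) (hPA.duality n)
  let T₀ : Matrix (Fin p) (Fin q) (Fam n) := .of fun i j => ⟨T i j, hTS i j⟩
  obtain ⟨r, V₀, V, hV₀, hV0, hV⟩ := exists_exact_matrix_sequence
    (fun _ K => exists_ker_rightMulMatrix_eq hℓ K) (range (rightMulMatrix T₀))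
  obtain ⟨ε, hε, hεV₀⟩ := exists_injective_range_eq e _ (ker_map_eq_range_map (hflat n) hV₀)
  exact ⟨r, ε, fun s => rightMulMatrix ((V s).map (Fam n).val), hε,
    hεV₀.trans (ker_map_eq_range_map (hflat n) hV0).symm,
    fun s => (ker_map_eq_range_map (hflat n) (hV s)).symm⟩

/-- Let `A` be a P-algebra over a field `k` that is flat as a right `A(n)`-module for every
`n` (equational criterion for flatness), and assume every finitely generated free `A`-module
is injective as an `A`-module (Margolis, Theorem 13.12).  Then every coherent `A`-module `M`
(i.e. `M ≅ A ⊗_{A(n)} M'` for some `n` and finitely generated graded `A(n)`-module `M'`)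
admits an injective resolution `0 → M → J^0 → J^1 → ⋯` in which every `J^s` is a finitely
generated free `A`-module. -/
theorem statement9 {k A : Type*} [Field k] [Ring A] [Algebra k A]
    (𝒜 : ℕ → Submodule k A) [GradedAlgebra 𝒜]
    (Fam : ℕ → Subalgebra k A) (pd : ℕ → ℕ)
    (hPA : IsPAlgebra k 𝒜 Fam pd)
    -- `A` is flat as a right `A(n)`-module for every `n`
    (hflat : ∀ (n m : ℕ) (x : Fin m → A), (∀ i, x i ∈ Fam n) → ∀ a : Fin m → A,
      ∑ i, a i * x i = 0 →
      ∃ (p : ℕ) (c : Fin p → A) (r : Fin p → Fin m → A),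
        (∀ j i, r j i ∈ Fam n) ∧ (∀ i, a i = ∑ j, c j * r j i) ∧
        (∀ j, ∑ i, r j i * x i = 0))
    -- every finitely generated free `A`-module is injective
    (hinj : ∀ m : ℕ, Module.Injective A (Fin m → A))
    -- `M` is a coherent `A`-module
    {M : Type*} [AddCommGroup M] [Module A M]
    (hM : ∃ n, IsInducedFrom 𝒜 (Fam n) M) :
    ∃ (r : ℕ → ℕ) (ε : M →ₗ[A] (Fin (r 0) → A))
      (δ : (s : ℕ) → ((Fin (r s) → A) →ₗ[A] (Fin (r (s + 1)) → A))),
      Function.Injective ε ∧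
      LinearMap.range ε = LinearMap.ker (δ 0) ∧
      ∀ s, LinearMap.range (δ s) = LinearMap.ker (δ (s + 1)) :=
  statement9_general 𝒜 Fam pd hPA hflat hM
end
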